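/- arXiv:2510.25643 — 8 statements merged into one kernel-verified Lean document; each statement's English description precedes it below -/
import Mathlib

section
/- Suppose f : ℝⁿ → ℝ is p times differentiable with Lipschitz continuous p-th derivative with constant L. Then the gradient of the p-th order Taylor expansion at x satisfies ‖∇f(y) - ∇t_x^p(y)‖ ≤ (L/p!)·‖x - y‖^p for all x, y ∈ ℝⁿ. -/
/-!
Differentiating term by term and using the symmetry of the iterated derivatives of a `C²`
function, the derivative of the degree `m + 1` Taylor polynomial of `f` at `x` is the degree `m`
Taylor polynomial of `Df` at `x`. The claim is therefore the Taylor remainder estimate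
`‖g y - t_x^m g(y)‖ ≤ L / (m + 1)! * ‖y - x‖ ^ (m + 1)` for `g = Df`, whose `m`-th derivative is
`L`-Lipschitz. That estimate follows by induction on `m`: by the inductive hypothesis applied to
`Dg`, the derivative of the remainder at `z` is at most `L / m! * ‖z - x‖ ^ m`, and
integrating this along the segment from `x` to `y` gives the bound.
-/

open Finset

universe u

section

-- `E` and `F` share a universe because the inductions below pass from `F` to `E →L[ℝ] F`.
variable {E F : Type u} [NormedAddCommGroup E] [NormedSpace ℝ E]
  [NormedAddCommGroup F] [NormedSpace ℝ F]

theorem iteratedFDeriv_fderiv_fderiv_apply_comm {f : E → F} (hf : ContDiff ℝ 2 f) (k : ℕ)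
    (x : E) (m : Fin k → E) (u v : E) :
    iteratedFDeriv ℝ k (fderiv ℝ (fderiv ℝ f)) x m u v =
      iteratedFDeriv ℝ k (fderiv ℝ (fderiv ℝ f)) x m v u := by
  let flip : (E →L[ℝ] E →L[ℝ] F) ≃L[ℝ] (E →L[ℝ] E →L[ℝ] F) :=
    (ContinuousLinearMap.flipₗᵢ ℝ E E F).toContinuousLinearEquiv
  have hsymm : flip ∘ fderiv ℝ (fderiv ℝ f) = fderiv ℝ (fderiv ℝ f) := by
    funext y
    ext v w
    exact (hf.contDiffAt.isSymmSndFDerivAt (by simp)) w v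
  have h := ContinuousLinearEquiv.iteratedFDeriv_comp_left (𝕜 := ℝ)
    (G := E →L[ℝ] E →L[ℝ] F) (g := flip) (f := fderiv ℝ (fderiv ℝ f)) (x := x) (i := k)
  rw [hsymm] at h
  conv_lhs => rw [h]
  rfl

theorem iteratedFDeriv_succ_apply_update_last (f : E → F) {k : ℕ} (x : E)
    (m : Fin (k + 1) → E) (h : E) :
    iteratedFDeriv ℝ (k + 1) f x (Function.update m (Fin.last k) h) =
      iteratedFDeriv ℝ k (fderiv ℝ f) x (Fin.init m) h := by
  rw [iteratedFDeriv_succ_apply_right, Fin.init_update_last, Function.update_self]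

theorem iteratedFDeriv_succ_apply_update_const {k : ℕ} {f : E → F}
    (hf : ContDiff ℝ (k + 1) f) (x v h : E) (i : Fin (k + 1)) :
    iteratedFDeriv ℝ (k + 1) f x (Function.update (fun _ => v) i h) =
      iteratedFDeriv ℝ k (fderiv ℝ f) x (fun _ => v) h := by
  induction k generalizing F with
  | zero =>
    obtain rfl : i = Fin.last 0 := Subsingleton.elim (α := Fin 1) _ _
    exact iteratedFDeriv_succ_apply_update_last f x _ h
  | succ k ih =>
    induction i using Fin.lastCases with
    | last => exact iteratedFDeriv_succ_apply_update_last f x _ h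
    | cast i =>
      have hf' : ContDiff ℝ (k + 1) (fderiv ℝ f) := hf.fderiv_right (by norm_cast)
      rw [iteratedFDeriv_succ_apply_right, Fin.init_update_castSucc,
        Function.update_of_ne (Fin.castSucc_lt_last i).ne',
        show Fin.init (fun _ : Fin (k + 2) => v) = fun _ => v from rfl, ih hf' i,
        iteratedFDeriv_fderiv_fderiv_apply_comm (hf.of_le (by norm_cast; omega)),
        iteratedFDeriv_succ_apply_right]
      rfl

theorem hasFDerivAt_iteratedFDeriv_apply_const_sub {k : ℕ} {f : E → F}
    (hf : ContDiff ℝ (k + 1) f) (x z : E) :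
    HasFDerivAt (fun z => iteratedFDeriv ℝ (k + 1) f x (fun _ => z - x))
      ((k + 1 : ℝ) • iteratedFDeriv ℝ k (fderiv ℝ f) x (fun _ => z - x)) z := by
  refine (HasFDerivAt.multilinear_comp _ fun _ => (hasFDerivAt_id z).sub_const x).congr_fderiv ?_
  ext h
  simp only [id_eq, ContinuousLinearMap.comp_id, _root_.sum_apply,
    ContinuousMultilinearMap.toContinuousLinearMap_apply,
    iteratedFDeriv_succ_apply_update_const hf, sum_const, card_univ, Fintype.card_fin,
    smul_apply, ← Nat.cast_smul_eq_nsmul ℝ, Nat.cast_succ]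

noncomputable def taylorPoly (f : E → F) (n : ℕ) (x z : E) : F :=
  ∑ j ∈ range (n + 1), (j.factorial : ℝ)⁻¹ • iteratedFDeriv ℝ j f x (fun _ => z - x)

theorem hasFDerivAt_taylorPoly_succ {n : ℕ} {f : E → F} (hf : ContDiff ℝ (n + 1) f) (x z : E) :
    HasFDerivAt (taylorPoly f (n + 1) x) (taylorPoly (fderiv ℝ f) n x z) z := by
  have hterm : ∀ k ∈ range (n + 1), HasFDerivAt
      (fun z => ((k + 1).factorial : ℝ)⁻¹ • iteratedFDeriv ℝ (k + 1) f x (fun _ => z - x))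
      ((k.factorial : ℝ)⁻¹ • iteratedFDeriv ℝ k (fderiv ℝ f) x (fun _ => z - x)) z := by
    intro k hk
    have hfk : ContDiff ℝ (k + 1) f := hf.of_le (by norm_cast; simpa using hk)
    refine ((hasFDerivAt_iteratedFDeriv_apply_const_sub hfk x z).const_smul _).congr_fderiv ?_
    rw [smul_smul]
    congr 1
    rw [Nat.factorial_succ]
    push_cast
    field_simp
  have hsum := (HasFDerivAt.fun_sum hterm).add_const (f x)
  unfold taylorPoly
  simp only [sum_range_succ' _ (n + 1), Nat.factorial_zero, Nat.cast_one, inv_one, one_smul,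
    iteratedFDeriv_zero_apply]
  exact hsum

theorem taylorPoly_self (f : E → F) (n : ℕ) (x : E) : taylorPoly f n x x = f x := by
  rw [taylorPoly, sum_range_succ', sum_eq_zero fun j _ => ?_]
  · simp
  · rw [sub_self, (iteratedFDeriv ℝ (j + 1) f x).map_coord_zero 0 rfl, smul_zero]

theorem norm_iteratedFDeriv_fderiv_sub (f : E → F) (n : ℕ) (a b : E) :
    ‖iteratedFDeriv ℝ n (fderiv ℝ f) a - iteratedFDeriv ℝ n (fderiv ℝ f) b‖ =
      ‖iteratedFDeriv ℝ (n + 1) f a - iteratedFDeriv ℝ (n + 1) f b‖ := by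
  rw [iteratedFDeriv_succ_eq_comp_right, iteratedFDeriv_succ_eq_comp_right, Function.comp_apply,
    Function.comp_apply, ← LinearIsometryEquiv.map_sub, LinearIsometryEquiv.norm_map]

theorem norm_le_of_hasFDerivAt_of_norm_le_mul_pow {R : E → F} {R' : E → E →L[ℝ] F}
    {x y : E} {C : ℝ} {k : ℕ} (hR : ∀ z, HasFDerivAt R (R' z) z) (hRx : R x = 0)
    (hR' : ∀ z, ‖R' z‖ ≤ C * ‖z - x‖ ^ k) :
    ‖R y‖ ≤ C / (k + 1) * ‖y - x‖ ^ (k + 1) := by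
  set c : ℝ → E := fun t => x + t • (y - x)
  have hc : ∀ t, HasDerivAt c (y - x) t := fun t =>
    (((hasDerivAt_id t).smul_const (y - x)).const_add x).congr_deriv (one_smul ℝ _)
  have hφ : ∀ t, HasDerivAt (R ∘ c) (R' (c t) (y - x)) t := fun t =>
    (hR (c t)).comp_hasDerivAt t (hc t)
  set B : ℝ → ℝ := fun t => C / (k + 1) * ‖y - x‖ ^ (k + 1) * t ^ (k + 1)
  have hB : ∀ t, HasDerivAt B (C * ‖y - x‖ ^ (k + 1) * t ^ k) t := fun t =>
    ((hasDerivAt_pow (k + 1) t).const_mul _).congr_deriv (by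
      rw [Nat.add_sub_cancel]; push_cast; field_simp)
  have bound : ∀ t ∈ Set.Ico (0 : ℝ) 1, ‖R' (c t) (y - x)‖ ≤ C * ‖y - x‖ ^ (k + 1) * t ^ k := by
    intro t ht
    have hct : ‖c t - x‖ = t * ‖y - x‖ := by
      simp [c, norm_smul, abs_of_nonneg ht.1]
    calc ‖R' (c t) (y - x)‖ ≤ ‖R' (c t)‖ * ‖y - x‖ := (R' (c t)).le_opNorm _
      _ ≤ C * ‖c t - x‖ ^ k * ‖y - x‖ := by gcongr; exact hR' _
      _ = C * ‖y - x‖ ^ (k + 1) * t ^ k := by rw [hct]; ring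
  have h0 : ‖(R ∘ c) 0‖ ≤ B 0 := by simp [c, B, hRx]
  simpa [c, B] using image_norm_le_of_norm_deriv_right_le_deriv_boundary
    (fun t _ => (hφ t).continuousAt.continuousWithinAt) (fun t _ => (hφ t).hasDerivWithinAt)
    h0 hB bound (Set.right_mem_Icc.mpr zero_le_one)

theorem norm_sub_taylorPoly_le {n : ℕ} {g : E → F} (hg : ContDiff ℝ n g) {L : ℝ}
    (hLip : ∀ a b, ‖iteratedFDeriv ℝ n g a - iteratedFDeriv ℝ n g b‖ ≤ L * ‖a - b‖)
    (x y : E) :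
    ‖g y - taylorPoly g n x y‖ ≤ L / (n + 1).factorial * ‖y - x‖ ^ (n + 1) := by
  induction n generalizing F y with
  | zero =>
    have h := hLip y x
    rw [iteratedFDeriv_zero_eq_comp, Function.comp_apply, Function.comp_apply,
      ← LinearIsometryEquiv.map_sub, LinearIsometryEquiv.norm_map] at h
    simpa [taylorPoly] using h
  | succ n ih =>
    have hDg : ContDiff ℝ n (fderiv ℝ g) := hg.fderiv_right (by norm_cast)
    have hLip' : ∀ a b, ‖iteratedFDeriv ℝ n (fderiv ℝ g) a - iteratedFDeriv ℝ n (fderiv ℝ g) b‖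
        ≤ L * ‖a - b‖ := fun a b => (norm_iteratedFDeriv_fderiv_sub g n a b).trans_le (hLip a b)
    have h := norm_le_of_hasFDerivAt_of_norm_le_mul_pow (y := y)
      (fun z => (hg.differentiable (by simp) z).hasFDerivAt.sub
        (hasFDerivAt_taylorPoly_succ hg x z))
      (by rw [Pi.sub_apply, taylorPoly_self, sub_self]) (fun z => ih hDg hLip' z)
    refine h.trans_eq ?_
    rw [Nat.factorial_succ (n + 1)]
    push_cast
    field_simp

theorem norm_fderiv_sub_fderiv_taylorPoly_le {n : ℕ} {f : E → F} (hf : ContDiff ℝ (n + 1) f)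
    {L : ℝ}
    (hLip : ∀ a b, ‖iteratedFDeriv ℝ (n + 1) f a - iteratedFDeriv ℝ (n + 1) f b‖ ≤ L * ‖a - b‖)
    (x y : E) :
    ‖fderiv ℝ f y - fderiv ℝ (taylorPoly f (n + 1) x) y‖ ≤
      L / (n + 1).factorial * ‖y - x‖ ^ (n + 1) := by
  rw [(hasFDerivAt_taylorPoly_succ hf x y).fderiv]
  exact norm_sub_taylorPoly_le (hf.fderiv_right (by norm_cast))
    (fun a b => (norm_iteratedFDeriv_fderiv_sub f n a b).trans_le (hLip a b)) x y

end

theorem stmt_8_general {n : ℕ} (p : ℕ) (hp : 2 ≤ p) (L : ℝ)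
    (f : EuclideanSpace ℝ (Fin n) → ℝ)
    (hf : ContDiff ℝ p f)
    (hLip : ∀ x y, ‖iteratedFDeriv ℝ p f x - iteratedFDeriv ℝ p f y‖ ≤ L * ‖x - y‖) :
    ∀ x y,
      ‖gradient f y - gradient (fun z => ∑ j ∈ Finset.range (p + 1),
          ((j.factorial : ℝ))⁻¹ * iteratedFDeriv ℝ j f x (fun _ => z - x)) y‖ ≤
        L / (p.factorial : ℝ) * ‖x - y‖ ^ p := by
  intro x y
  obtain ⟨m, rfl⟩ : ∃ m, p = m + 1 := ⟨p - 1, by omega⟩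
  have h := norm_fderiv_sub_fderiv_taylorPoly_le hf hLip x y
  rw [norm_sub_rev y x, ← (InnerProductSpace.toDual ℝ _).symm.norm_map,
    LinearIsometryEquiv.map_sub] at h
  exact h

theorem stmt_8 {n : ℕ} (p : ℕ) (hp : 2 ≤ p) (L : ℝ) (hL : 0 < L)
    (f : EuclideanSpace ℝ (Fin n) → ℝ)
    (hf : ContDiff ℝ p f)
    (hLip : ∀ x y, ‖iteratedFDeriv ℝ p f x - iteratedFDeriv ℝ p f y‖ ≤ L * ‖x - y‖) :
    ∀ x y,
      ‖gradient f y - gradient (fun z => ∑ j ∈ Finset.range (p + 1),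
          ((j.factorial : ℝ))⁻¹ * iteratedFDeriv ℝ j f x (fun _ => z - x)) y‖ ≤
        L / (p.factorial : ℝ) * ‖x - y‖ ^ p :=
  stmt_8_general p hp L f hf hLip
end

section
/- In the ARp setting, if the regularization parameter satisfies σ_k ≥ (1/(1-η))·(L_p/(p+1)!) and the trial point y_k satisfies m_k(y_k) < m_k(x_k), then the success ratio ρ_k = (f(x_k) - f(y_k)) / (t_k(x_k) - t_k(y_k)) satisfies |ρ_k - 1| ≤ 1 - η, and in particular ρ_k ≥ η. -/
theorem stmt_9 {n : ℕ} (p : ℕ) (hp : 2 ≤ p) (L η σ : ℝ)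
    (hL : 0 < L) (hη0 : 0 < η) (hη1 : η < 1)
    (f t m : EuclideanSpace ℝ (Fin n) → ℝ)
    (xk yk : EuclideanSpace ℝ (Fin n))
    (hm : ∀ y, m y = t y + σ * ‖y - xk‖ ^ (p + 1))
    (ht : t xk = f xk)
    (hTaylor : |t yk - f yk| ≤ L / ((p + 1).factorial : ℝ) * ‖yk - xk‖ ^ (p + 1))
    (hdec : m yk < m xk)
    (hne : yk ≠ xk)
    (hσ : 1 / (1 - η) * (L / ((p + 1).factorial : ℝ)) ≤ σ) :
    |(f xk - f yk) / (t xk - t yk) - 1| ≤ 1 - η ∧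
      η ≤ (f xk - f yk) / (t xk - t yk) := by
  set D : ℝ := ‖yk - xk‖ ^ (p + 1) with hD
  have hD0 : 0 < D := by
    apply pow_pos
    rw [norm_pos_iff, sub_ne_zero]
    exact hne
  have h1η : 0 < 1 - η := by linarith
  have hLf : 0 < L / ((p + 1).factorial : ℝ) := by
    apply div_pos hL
    exact_mod_cast Nat.factorial_pos _
  have hσ0 : 0 < σ := lt_of_lt_of_le (by positivity) hσ
  have hmx : m xk = t xk := by
    rw [hm xk]
    simp
  have hmy : m yk = t yk + σ * D := hm yk
  have hgap : σ * D ≤ t xk - t yk := by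
    rw [hmx, hmy] at hdec; linarith
  have hgap0 : 0 < t xk - t yk := lt_of_lt_of_le (by positivity) hgap
  have key : |(f xk - f yk) / (t xk - t yk) - 1| ≤ 1 - η := by
    have : (f xk - f yk) / (t xk - t yk) - 1 = (t yk - f yk) / (t xk - t yk) := by
      field_simp
      rw [ht]
      ring
    rw [this, abs_div, abs_of_pos hgap0]
    rw [div_le_iff₀ hgap0]
    calc |t yk - f yk| ≤ L / ((p + 1).factorial : ℝ) * D := hTaylor
      _ ≤ (1 - η) * σ * D := by
          have : L / ((p + 1).factorial : ℝ) ≤ (1 - η) * σ := by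
            rw [div_mul_eq_mul_div, div_le_iff₀ h1η] at hσ
            nlinarith [hσ]
          nlinarith
      _ ≤ (1 - η) * (t xk - t yk) := by nlinarith
  refine ⟨key, ?_⟩
  have := abs_le.mp key
  linarith [this.1]
end

section
/- In the ARp algorithm (where σ is multiplied by γ₂ > 1 on unsuccessful iterations, by γ₁ ≤ 1 on very successful ones, and every iteration with σ_k ≥ (1/(1-η))·(L_p/(p+1)!) is successful), the regularization parameter remains bounded: σ_k ≤ max{σ₀, (γ₂/(1-η))·(L_p/(p+1)!)} for all k. -/
theorem stmt_10 (p : ℕ) (hp : 2 ≤ p) (L η γ₁ γ₂ σ₀ : ℝ)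
    (hL : 0 < L) (hη0 : 0 < η) (hη1 : η < 1)
    (hγ₁0 : 0 < γ₁) (hγ₁1 : γ₁ ≤ 1) (hγ₂ : 1 < γ₂) (hσ₀ : 0 < σ₀)
    (σ : ℕ → ℝ) (success : ℕ → Prop)
    (hinit : σ 0 = σ₀)
    (hsucc : ∀ k, success k → σ (k + 1) = γ₁ * σ k ∨ σ (k + 1) = σ k)
    (hunsucc : ∀ k, ¬ success k → σ (k + 1) = γ₂ * σ k)
    (hguar : ∀ k, 1 / (1 - η) * (L / ((p + 1).factorial : ℝ)) ≤ σ k → success k) :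
    ∀ k, σ k ≤ max σ₀ (γ₂ / (1 - η) * (L / ((p + 1).factorial : ℝ))) := by
  set B : ℝ := 1 / (1 - η) * (L / ((p + 1).factorial : ℝ)) with hB
  have hpos : ∀ k, 0 < σ k := by
    intro k
    induction k with
    | zero => rw [hinit]; exact hσ₀
    | succ n ih =>
      by_cases hs : success n
      · rcases hsucc n hs with h | h
        · rw [h]; exact mul_pos hγ₁0 ih
        · rw [h]; exact ih
      · rw [hunsucc n hs]; exact mul_pos (lt_trans one_pos hγ₂) ih
  intro k
  induction k with
  | zero => rw [hinit]; exact le_max_left _ _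
  | succ n ih =>
    by_cases hs : success n
    · have hle : σ (n + 1) ≤ σ n := by
        rcases hsucc n hs with h | h
        · rw [h]
          calc γ₁ * σ n ≤ 1 * σ n := by
                exact mul_le_mul_of_nonneg_right hγ₁1 (hpos n).le
            _ = σ n := one_mul _
        · rw [h]
      exact hle.trans ih
    · have hlt : σ n < B := by
        by_contra h
        exact hs (hguar n (le_of_not_gt h))
      rw [hunsucc n hs]
      have : γ₂ * σ n ≤ γ₂ * B :=
        mul_le_mul_of_nonneg_left hlt.le (le_of_lt (lt_trans one_pos hγ₂))
      refine this.trans (le_max_of_le_right ?_)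
      rw [hB]
      ring_nf
      exact le_refl _
end

section
/- Consider the abstract ARp iteration with σ_{k+1} = γ₁σ_k on successful iterations and σ_{k+1} = γ₂σ_k on unsuccessful ones, where γ₁ = γ₂^(-α) with γ₂ > 1 and α ≥ 0, and suppose σ_k ≤ σ_max for all k. Let s_k and u_k denote the numbers of successful and unsuccessful iterations among iterations 0,...,k-1 (so s_k + u_k = k). Then s_k ≥ k/(α+1) − log(σ_max/σ₀)/((α+1)·log γ₂) for all k. -/
theorem stmt_11 (γ₂ α σ₀ σmax : ℝ)
    (hγ₂ : 1 < γ₂) (hα : 0 ≤ α) (hσ₀ : 0 < σ₀) (hσmax : σ₀ ≤ σmax)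
    (σ : ℕ → ℝ) (success : ℕ → Prop) [DecidablePred success]
    (hinit : σ 0 = σ₀)
    (hsucc : ∀ k, success k → σ (k + 1) = γ₂ ^ (-α) * σ k)
    (hunsucc : ∀ k, ¬ success k → σ (k + 1) = γ₂ * σ k)
    (hbound : ∀ k, σ k ≤ σmax) :
    ∀ k : ℕ, (k : ℝ) / (α + 1) - Real.log (σmax / σ₀) / ((α + 1) * Real.log γ₂) ≤
      (((Finset.range k).filter success).card : ℝ) := by
  have hγ₂0 : 0 < γ₂ := lt_trans one_pos hγ₂
  have hlog : 0 < Real.log γ₂ := Real.log_pos hγ₂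
  set s : ℕ → ℝ := fun k => (((Finset.range k).filter success).card : ℝ) with hs
  have key : ∀ k, σ k = σ₀ * γ₂ ^ ((k : ℝ) - (α + 1) * s k) := by
    intro k
    induction k with
    | zero =>
      simp [hinit, hs]
    | succ n ih =>
      have hcard : s (n + 1) = s n + (if success n then 1 else 0) := by
        simp only [hs, Finset.range_add_one, Finset.filter_insert]
        split_ifs with h'
        · rw [Finset.card_insert_of_notMem (by simp)]
          push_cast; ring
        · simp
      by_cases h : success n
      · rw [hsucc n h, ih, hcard, if_pos h]
        have he : ((n : ℝ) + 1) - (α + 1) * (s n + 1) = (-α) + ((n : ℝ) - (α + 1) * s n) := by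
          ring
        push_cast
        rw [he, Real.rpow_add hγ₂0]
        ring
      · rw [hunsucc n h, ih, hcard, if_neg h]
        have he : ((n : ℝ) + 1) - (α + 1) * (s n + 0) = 1 + ((n : ℝ) - (α + 1) * s n) := by
          ring
        push_cast
        rw [he, Real.rpow_add hγ₂0, Real.rpow_one]
        ring
  intro k
  have hb := hbound k
  rw [key k] at hb
  have h1 : γ₂ ^ ((k : ℝ) - (α + 1) * s k) ≤ σmax / σ₀ := by
    rw [le_div_iff₀ hσ₀]
    linarith [hb]
  have h2 : ((k : ℝ) - (α + 1) * s k) * Real.log γ₂ ≤ Real.log (σmax / σ₀) := by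
    calc ((k : ℝ) - (α + 1) * s k) * Real.log γ₂
        = Real.log (γ₂ ^ ((k : ℝ) - (α + 1) * s k)) := (Real.log_rpow hγ₂0 _).symm
      _ ≤ Real.log (σmax / σ₀) := Real.log_le_log (Real.rpow_pos_of_pos hγ₂0 _) h1
  have hα1 : (0:ℝ) < α + 1 := by linarith
  have hpos : (0:ℝ) < (α + 1) * Real.log γ₂ := by positivity
  set t := Real.log (σmax / σ₀) / ((α + 1) * Real.log γ₂) with ht
  set r := (k : ℝ) / (α + 1) with hr
  have htt : Real.log (σmax / σ₀) = t * ((α + 1) * Real.log γ₂) :=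
    (div_mul_cancel₀ _ hpos.ne').symm
  have hrr : (k : ℝ) = r * (α + 1) := (div_mul_cancel₀ _ hα1.ne').symm
  rw [htt, hrr] at h2
  nlinarith [h2, hpos, mul_pos hα1 hlog]
end

section
/- Let f(x) = 3x⁴ − 4x³ and let m(y) = f(y) + (σ − 3)(y − x)⁴ for a fixed expansion point x ∈ [4/5, 6/5] and 0 ≤ σ ≤ 2. Then min over y ∈ [0, 4/3] of m(y) is strictly greater than m(−1); consequently every global minimizer of m over ℝ lies outside [0, 4/3]. -/
theorem stmt_13 (f : ℝ → ℝ) (hf : ∀ x, f x = 3 * x ^ 4 - 4 * x ^ 3)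
    (x σ : ℝ) (hx : x ∈ Set.Icc (4/5 : ℝ) (6/5)) (hσ0 : 0 ≤ σ) (hσ2 : σ ≤ 2)
    (m : ℝ → ℝ) (hm : ∀ y, m y = f y + (σ - 3) * (y - x) ^ 4) :
    (∀ y ∈ Set.Icc (0 : ℝ) (4/3), m (-1) < m y) ∧
      ∀ z : ℝ, (∀ y : ℝ, m z ≤ m y) → z ∉ Set.Icc (0 : ℝ) (4/3) := by
  obtain ⟨hx1, hx2⟩ := hx
  have key : ∀ y ∈ Set.Icc (0 : ℝ) (4/3), m (-1) < m y := by
    rintro y ⟨hy1, hy2⟩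
    rw [hm, hm, hf, hf]
    have h1 : (y - x) ^ 4 ≤ (6/5 : ℝ) ^ 4 := by
      have habs : |y - x| ≤ 6/5 := abs_le.2 ⟨by linarith, by linarith⟩
      calc (y - x) ^ 4 = |y - x| ^ 4 := by
            rw [← abs_pow, abs_of_nonneg (by positivity)]
        _ ≤ (6/5 : ℝ) ^ 4 := by gcongr
    have h2 : (9/5 : ℝ) ^ 4 ≤ (-1 - x) ^ 4 := by
      have habs : (9/5 : ℝ) ≤ |(-1 - x)| := by
        rw [abs_of_nonpos (by linarith)]; linarith
      calc (9/5 : ℝ) ^ 4 ≤ |(-1 - x)| ^ 4 := by gcongr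
        _ = (-1 - x) ^ 4 := by rw [← abs_pow, abs_of_nonneg (by positivity)]
    have hA : (σ - 3) * (6/5 : ℝ) ^ 4 ≤ (σ - 3) * (y - x) ^ 4 :=
      mul_le_mul_of_nonpos_left h1 (by linarith)
    have hB : (σ - 3) * (-1 - x) ^ 4 ≤ (σ - 3) * (9/5 : ℝ) ^ 4 :=
      mul_le_mul_of_nonpos_left h2 (by linarith)
    have hfy : -1 ≤ 3 * y ^ 4 - 4 * y ^ 3 := by
      nlinarith [sq_nonneg (y - 1), sq_nonneg y,
        mul_nonneg (sq_nonneg (y - 1)) (by nlinarith [sq_nonneg y] : (0:ℝ) ≤ 3*y^2 + 2*y + 1)]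
    nlinarith [hA, hB, hfy]
  refine ⟨key, fun z hz hzmem => ?_⟩
  have := key z hzmem
  have := hz (-1)
  linarith
end

section
/- Let q ≥ 2 be even, p > q − 1 integers, and f(x) = x^q/q + x^(p+1)/(p+1) on ℝ. Then f is locally uniformly convex of order q around x* = 0: there exist μ > 0 and r > 0 such that (f'(x) − f'(y))(x − y) ≥ μ|x − y|^q for all x, y ∈ [−r, r]. -/
-- Lipschitz-type bound for powers
lemma pow_sub_pow_abs_le (x y : ℝ) (n : ℕ) :
    |x ^ n - y ^ n| ≤ n * max |x| |y| ^ (n - 1) * |x - y| := by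
  induction n with
  | zero => simp
  | succ n ih =>
    set M := max |x| |y| with hM
    have hxM : |x| ≤ M := le_max_left _ _
    have hyM : |y| ≤ M := le_max_right _ _
    have hM0 : 0 ≤ M := le_trans (abs_nonneg x) hxM
    have key : x ^ (n+1) - y ^ (n+1) = x * (x ^ n - y ^ n) + (x - y) * y ^ n := by
      ring
    have h1 : |x ^ (n+1) - y ^ (n+1)| ≤ |x| * |x ^ n - y ^ n| + |x - y| * |y| ^ n := by
      rw [key]
      calc |x * (x ^ n - y ^ n) + (x - y) * y ^ n|
          ≤ |x * (x ^ n - y ^ n)| + |(x - y) * y ^ n| := abs_add_le _ _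
        _ = |x| * |x ^ n - y ^ n| + |x - y| * |y| ^ n := by
            rw [abs_mul, abs_mul, abs_pow]
    have h2 : |x| * |x ^ n - y ^ n| ≤ n * M ^ n * |x - y| := by
      rcases Nat.eq_zero_or_pos n with hn | hn
      · simp [hn]
      · obtain ⟨k, rfl⟩ : ∃ k, n = k + 1 := ⟨n - 1, by omega⟩
        calc |x| * |x ^ (k+1) - y ^ (k+1)| ≤ M * ((k+1 : ℕ) * M ^ (k+1-1) * |x - y|) := by
              apply mul_le_mul hxM ih (abs_nonneg _) hM0
          _ = (k+1 : ℕ) * M ^ (k+1) * |x - y| := by push_cast; ring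
    have h3 : |x - y| * |y| ^ n ≤ M ^ n * |x - y| := by
      rw [mul_comm]
      apply mul_le_mul_of_nonneg_right (pow_le_pow_left₀ (abs_nonneg _) hyM n) (abs_nonneg _)
    calc |x ^ (n+1) - y ^ (n+1)| ≤ n * M ^ n * |x - y| + M ^ n * |x - y| := by
          linarith
      _ = (n+1 : ℕ) * M ^ ((n+1) - 1) * |x - y| := by push_cast; ring_nf

lemma aux1 (m : ℕ) (hm : Odd m) (x y : ℝ) (hx : 0 ≤ x) (hy : |y| ≤ x) :
    2⁻¹ * x ^ (m - 1) * (x - y) ^ 2 ≤ (x ^ m - y ^ m) * (x - y) := by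
  obtain ⟨k, rfl⟩ := hm
  have hm1 : 2 * k + 1 - 1 = 2 * k := by omega
  rw [hm1]
  rcases le_or_gt 0 y with h0 | h0
  · have hyx : y ≤ x := le_trans (le_abs_self y) hy
    have h1 : y ^ (2*k) ≤ x ^ (2*k) := pow_le_pow_left₀ h0 hyx _
    have h2 : y * y ^ (2*k) ≤ y * x ^ (2*k) := mul_le_mul_of_nonneg_left h1 h0
    have h3 : 0 ≤ x ^ (2*k) := pow_nonneg hx _
    nlinarith [sq_nonneg (x - y), pow_succ x (2*k), pow_succ y (2*k)]
  · have ht : -y ≤ x := by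
      have := neg_abs_le y
      rw [abs_of_neg h0] at hy
      linarith
    have h1 : (-y) ^ (2*k+1) = -(y ^ (2*k+1)) := by
      rw [neg_pow]
      simp [pow_succ]
    have h2 : 0 ≤ (-y) ^ (2*k+1) := pow_nonneg (by linarith) _
    have h3 : (-y) ^ (2*k) ≤ x ^ (2*k) := pow_le_pow_left₀ (by linarith) ht _
    have h4 : 0 ≤ x ^ (2*k) := pow_nonneg hx _
    -- x - y = x + (-y) ≥ 0, and (x^m + (-y)^m)(x + (-y)) ≥ (1/2) x^(m-1) (x+(-y))^2
    nlinarith [pow_succ x (2*k), pow_succ (-y) (2*k), sq_nonneg (x + y), sq_nonneg (x - y),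
      mul_nonneg h4 (by linarith : (0:ℝ) ≤ -y)]

lemma key (m : ℕ) (hm : Odd m) (x y : ℝ) :
    2⁻¹ * max |x| |y| ^ (m - 1) * (x - y) ^ 2 ≤ (x ^ m - y ^ m) * (x - y) := by
  -- reduce to |y| ≤ |x|
  have main : ∀ a b : ℝ, |b| ≤ |a| →
      2⁻¹ * max |a| |b| ^ (m - 1) * (a - b) ^ 2 ≤ (a ^ m - b ^ m) * (a - b) := by
    intro a b hab
    rw [max_eq_left hab]
    rcases le_or_gt 0 a with ha | ha
    · rw [abs_of_nonneg ha]
      exact aux1 m hm a b ha (by rwa [abs_of_nonneg ha] at hab)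
    · have h1 := aux1 m hm (-a) (-b) (by linarith) (by rw [abs_neg]; simpa [abs_of_neg ha] using hab)
      have hodd : ∀ z : ℝ, (-z) ^ m = -(z ^ m) := fun z => hm.neg_pow z
      rw [abs_of_neg ha]
      rw [hodd, hodd] at h1
      calc 2⁻¹ * (-a) ^ (m-1) * (a - b) ^ 2 = 2⁻¹ * (-a) ^ (m-1) * (-a - -b) ^ 2 := by ring
        _ ≤ (-(a^m) - -(b^m)) * (-a - -b) := h1
        _ = (a ^ m - b ^ m) * (a - b) := by ring
  rcases le_total |y| |x| with h | h
  · exact main x y h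
  · have := main y x h
    rw [max_comm]
    calc 2⁻¹ * max |y| |x| ^ (m-1) * (x - y)^2 = 2⁻¹ * max |y| |x| ^ (m-1) * (y - x)^2 := by ring
      _ ≤ (y ^ m - x ^ m) * (y - x) := this
      _ = (x ^ m - y ^ m) * (x - y) := by ring


theorem stmt_15 (q p : ℕ) (hq2 : 2 ≤ q) (hqeven : Even q) (hpq : q - 1 < p)
    (f : ℝ → ℝ) (hf : ∀ x, f x = x ^ q / q + x ^ (p + 1) / (p + 1)) :
    ∃ μ > (0 : ℝ), ∃ r > (0 : ℝ), ∀ x ∈ Set.Icc (-r) r, ∀ y ∈ Set.Icc (-r) r,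
      μ * |x - y| ^ q ≤ (deriv f x - deriv f y) * (x - y) := by
  have hq0 : (q:ℝ) ≠ 0 := by positivity
  have hp0 : (p:ℝ) + 1 ≠ 0 := by positivity
  have hfe : f = fun x : ℝ => x ^ q / (q:ℝ) + x ^ (p+1) / ((p:ℝ)+1) := by
    funext z
    rw [hf z]

  have hderiv : ∀ z : ℝ, deriv f z = z ^ (q-1) + z ^ p := by
    intro z
    have h1 : HasDerivAt (fun x : ℝ => x ^ q / (q:ℝ) + x ^ (p+1) / ((p:ℝ)+1))
        ((q:ℝ) * z ^ (q-1) / (q:ℝ) + (((p:ℝ)+1) * z ^ p) / ((p:ℝ)+1)) z := by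
      apply HasDerivAt.add
      · exact (hasDerivAt_pow q z).div_const _
      · have := (hasDerivAt_pow (p+1) z).div_const ((p:ℝ)+1)
        simpa using this
    rw [hfe, h1.deriv, mul_div_cancel_left₀ _ hq0, mul_div_cancel_left₀ _ hp0]
  obtain ⟨a, rfl⟩ : ∃ a, q = a + 2 := ⟨q - 2, by omega⟩
  obtain ⟨b, rfl⟩ : ∃ b, p = a + b + 2 := ⟨p - a - 2, by omega⟩
  have hodd : Odd (a + 1) := by
    have ha : Even a := by
      rcases hqeven with ⟨t, ht⟩
      exact ⟨t - 1, by omega⟩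
    exact ha.add_one
  set c : ℝ := ((a + b + 2 : ℕ) : ℝ) with hc
  have hc0 : 0 < c := by positivity
  refine ⟨(2:ℝ)⁻¹ ^ (a + 2), by positivity, min 1 (1/(4*c+4)), by positivity, ?_⟩
  intro x hx y hy
  have hxr : |x| ≤ min 1 (1/(4*c+4)) := abs_le.mpr ⟨hx.1, hx.2⟩
  have hyr : |y| ≤ min 1 (1/(4*c+4)) := abs_le.mpr ⟨hy.1, hy.2⟩
  set M : ℝ := max |x| |y| with hM
  have hM0 : 0 ≤ M := le_trans (abs_nonneg x) (le_max_left _ _)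
  have hM1 : M ≤ 1 := by
    apply max_le <;> [exact le_trans hxr (min_le_left _ _); exact le_trans hyr (min_le_left _ _)]
  have hMr : M ≤ 1/(4*c+4) := by
    apply max_le <;> [exact le_trans hxr (min_le_right _ _); exact le_trans hyr (min_le_right _ _)]
  -- main convexity term
  have h1 : 2⁻¹ * M ^ a * (x - y) ^ 2 ≤ (x ^ (a+1) - y ^ (a+1)) * (x - y) := by
    have := key (a+1) hodd x y
    simpa using this
  -- error term
  have herr : |x ^ (a+b+2) - y ^ (a+b+2)| ≤ c * M ^ (a+b+1) * |x - y| := by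
    have hc' : c = (a:ℝ) + b + 2 := by rw [hc]; push_cast; ring
    have := pow_sub_pow_abs_le x y (a+b+2)
    rw [hc']
    simpa using this
  have h2 : -(c * M ^ (a+b+1) * (x - y) ^ 2) ≤ (x ^ (a+b+2) - y ^ (a+b+2)) * (x - y) := by
    have habs : |(x ^ (a+b+2) - y ^ (a+b+2)) * (x - y)| ≤ c * M ^ (a+b+1) * (x-y)^2 := by
      rw [abs_mul]
      calc |x ^ (a+b+2) - y ^ (a+b+2)| * |x - y| ≤ (c * M ^ (a+b+1) * |x - y|) * |x - y| :=
            mul_le_mul_of_nonneg_right herr (abs_nonneg _)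
        _ = c * M ^ (a+b+1) * (x-y)^2 := by rw [mul_assoc, ← sq_abs]; ring
    linarith [neg_abs_le ((x ^ (a+b+2) - y ^ (a+b+2)) * (x - y)), habs]
  -- smallness of error coefficient
  have h3 : c * M ^ (a+b+1) ≤ 4⁻¹ * M ^ a := by
    have hb1 : M ^ (b+1) ≤ M := by
      calc M ^ (b+1) ≤ M ^ 1 := pow_le_pow_of_le_one hM0 hM1 (by omega)
        _ = M := pow_one M
    have hsplit : M ^ (a+b+1) = M ^ a * M ^ (b+1) := by rw [← pow_add]; ring_nf
    rw [hsplit]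
    have hMa : 0 ≤ M ^ a := pow_nonneg hM0 _
    have step1 : c * (M ^ a * M ^ (b+1)) ≤ c * (M ^ a * (1/(4*c+4))) := by
      apply mul_le_mul_of_nonneg_left _ (le_of_lt hc0)
      exact mul_le_mul_of_nonneg_left (le_trans hb1 hMr) hMa
    have step2 : c * (M ^ a * (1/(4*c+4))) ≤ 4⁻¹ * M ^ a := by
      rw [show c * (M ^ a * (1/(4*c+4))) = M ^ a * (c / (4*c+4)) by ring]
      have : c / (4*c+4) ≤ 4⁻¹ := by
        rw [div_le_iff₀ (by linarith)]
        linarith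
      calc M ^ a * (c / (4*c+4)) ≤ M ^ a * 4⁻¹ := mul_le_mul_of_nonneg_left this hMa
        _ = 4⁻¹ * M ^ a := by ring
    linarith
  have h4 : 4⁻¹ * M ^ a * (x-y)^2 ≤
      (x ^ (a+1) - y ^ (a+1)) * (x - y) + (x ^ (a+b+2) - y ^ (a+b+2)) * (x - y) := by
    have := mul_le_mul_of_nonneg_right h3 (sq_nonneg (x - y))
    linarith
  -- from M ≥ |x-y|/2
  have h5 : |x - y| ≤ 2 * M := by
    calc |x - y| ≤ |x| + |y| := abs_sub x y
      _ ≤ M + M := add_le_add (le_max_left _ _) (le_max_right _ _)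
      _ = 2 * M := by ring
  have h6 : |x - y| ^ a ≤ 2 ^ a * M ^ a := by
    calc |x - y| ^ a ≤ (2 * M) ^ a := pow_le_pow_left₀ (abs_nonneg _) h5 a
      _ = 2 ^ a * M ^ a := mul_pow _ _ _
  have hpow : ((2:ℝ)⁻¹) ^ (a+2) * 2 ^ a = 4⁻¹ := by
    have hone : ((2:ℝ)⁻¹) ^ a * 2 ^ a = 1 := by
      rw [← mul_pow]; norm_num
    rw [pow_add]
    nlinarith [hone]
  have e1 : |x - y| ^ (a+2) = |x - y| ^ a * (x - y)^2 := by
    rw [pow_add, sq_abs]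
  have h7 : ((2:ℝ)⁻¹) ^ (a+2) * |x - y| ^ (a+2) ≤ 4⁻¹ * M ^ a * (x-y)^2 := by
    rw [e1]
    calc ((2:ℝ)⁻¹) ^ (a+2) * (|x - y| ^ a * (x - y)^2)
        ≤ ((2:ℝ)⁻¹) ^ (a+2) * ((2 ^ a * M ^ a) * (x - y)^2) := by
          apply mul_le_mul_of_nonneg_left _ (by positivity)
          exact mul_le_mul_of_nonneg_right h6 (sq_nonneg _)
      _ = (((2:ℝ)⁻¹) ^ (a+2) * 2 ^ a) * (M ^ a * (x - y)^2) := by ring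
      _ = 4⁻¹ * M ^ a * (x-y)^2 := by rw [hpow]; ring
  rw [hderiv x, hderiv y]
  have heq : ((x ^ (a + 2 - 1) + x ^ (a+b+2)) - (y ^ (a + 2 - 1) + y ^ (a+b+2))) * (x - y) =
      (x ^ (a+1) - y ^ (a+1)) * (x - y) + (x ^ (a+b+2) - y ^ (a+b+2)) * (x - y) := by
    have : a + 2 - 1 = a + 1 := by omega
    rw [this]; ring
  rw [heq]
  linarith
end

section
/- Let q ≥ 2 be even, p > q − 1, f(x) = x^q/q + x^(p+1)/(p+1), x_k ∈ ℝ with x_k ≠ 0, and set y_k = −|x_k|^(p/(q−1))·sign(x_k). Let m_k(y) = t_{x_k}^p(y) + σ|y − x_k|^(p+1) be the regularized p-th order Taylor model with 0 ≤ σ ≤ 1/(p+1). Then |m_k'(y_k)| ≤ 3·|y_k − x_k|^p. -/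
/-!
The derivative of the model is `y^(q-1) + y^p - (y - x)^p + (p+1) σ |y - x|^(p-1) (y - x)`.
At `y = y_k` we have `y_k x_k ≤ 0`, so `|y_k - x_k| = |y_k| + |x_k|`, and `|y_k^(q-1)| ≤ |x_k|^p`
by the choice of the exponent `p/(q-1)`. Hence the first two terms have modulus at most
`|x_k|^p + |y_k|^p ≤ |y_k - x_k|^p`, and each of the last two at most `|y_k - x_k|^p` because
`σ (p+1) ≤ 1`.
-/

theorem hasDerivAt_abs_pow_succ {n : ℕ} (hn : n ≠ 0) (t : ℝ) :
    HasDerivAt (fun t : ℝ => |t| ^ (n + 1)) ((n + 1) * |t| ^ (n - 1) * t) t := by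
  have h := hasDerivAt_abs_rpow t (p := n + 1) (by norm_cast; omega)
  have hexp : (n : ℝ) + 1 - 2 = ((n - 1 : ℕ) : ℝ) := by
    push_cast [Nat.one_le_iff_ne_zero.2 hn]; ring
  simp only [hexp, Real.rpow_natCast] at h
  exact_mod_cast h

theorem hasDerivAt_pow_div_self {n : ℕ} (hn : n ≠ 0) (y : ℝ) :
    HasDerivAt (fun y : ℝ => y ^ n / n) (y ^ (n - 1)) y :=
  ((hasDerivAt_pow n y).div_const (n : ℝ)).congr_deriv
    (mul_div_cancel_left₀ _ (Nat.cast_ne_zero.2 hn))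

/-- For `q ≤ p` the `p`-th order Taylor polynomial of `f y = y^q/q + y^(p+1)/(p+1)` at `x` is
`f y - (y - x)^(p+1)/(p+1)`; the model adds the regularization `σ |y - x|^(p+1)` to it. -/
noncomputable def regTaylorModel (q p : ℕ) (x σ : ℝ) (y : ℝ) : ℝ :=
  (y ^ q / q + y ^ (p + 1) / (p + 1)) - (1 / (p + 1)) * (y - x) ^ (p + 1) + σ * |y - x| ^ (p + 1)

theorem hasDerivAt_regTaylorModel {q p : ℕ} (hq : q ≠ 0) (hp : p ≠ 0) (x σ y : ℝ) :
    HasDerivAt (regTaylorModel q p x σ)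
      (y ^ (q - 1) + y ^ p - (y - x) ^ p + σ * ((p + 1) * |y - x| ^ (p - 1) * (y - x))) y := by
  have hshift := (hasDerivAt_id' y).sub_const x
  have hpow := hasDerivAt_pow_div_self (Nat.succ_ne_zero p) y
  have htaylor := (hasDerivAt_pow_div_self (Nat.succ_ne_zero p) (y - x)).comp y hshift
  have hreg := (hasDerivAt_abs_pow_succ hp (y - x)).comp y hshift
  push_cast at hpow htaylor
  refine ((((hasDerivAt_pow_div_self hq y).add hpow).sub htaylor).add (hreg.const_mul σ)
    |>.congr_deriv (by ring)).congr_of_eventuallyEq (.of_forall fun z => ?_)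
  simp only [regTaylorModel, Pi.add_apply, Pi.sub_apply, Function.comp_apply, Nat.succ_eq_add_one]
  ring

theorem abs_sub_eq_abs_add_abs_of_mul_nonpos {a b : ℝ} (h : a * b ≤ 0) :
    |a - b| = |a| + |b| := by
  rw [← sq_eq_sq₀ (abs_nonneg _) (by positivity), sq_abs, add_sq, sq_abs, sq_abs, mul_assoc,
    ← abs_mul, abs_of_nonpos h]
  ring

theorem Real.abs_sign_le_one (r : ℝ) : |Real.sign r| ≤ 1 := by
  rcases Real.sign_apply_eq r with h | h | h <;> simp [h]

theorem abs_regTaylorModel_deriv_le {p : ℕ} (hp : p ≠ 0) {σ a x y : ℝ} (hσ0 : 0 ≤ σ)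
    (hσ : σ ≤ 1 / (p + 1)) (ha : |a| ≤ |x| ^ p) (hyx : |y - x| = |y| + |x|) :
    |a + y ^ p - (y - x) ^ p + σ * ((p + 1) * |y - x| ^ (p - 1) * (y - x))|
      ≤ 3 * |y - x| ^ p := by
  have hp1 : (0 : ℝ) < p + 1 := by positivity
  have hmain : |a + y ^ p| ≤ |y - x| ^ p :=
    calc |a + y ^ p| ≤ |x| ^ p + |y| ^ p := by grw [abs_add_le, ha, abs_pow]
      _ ≤ |y - x| ^ p := by
        rw [hyx, add_comm |y|]
        exact pow_add_pow_le (abs_nonneg x) (abs_nonneg y) hp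
  have hreg : |σ * ((p + 1) * |y - x| ^ (p - 1) * (y - x))| ≤ |y - x| ^ p :=
    calc |σ * ((p + 1) * |y - x| ^ (p - 1) * (y - x))| = σ * (p + 1) * |y - x| ^ p := by
          rw [abs_mul, abs_mul, abs_mul, abs_pow, abs_abs, abs_of_nonneg hσ0, abs_of_pos hp1,
            mul_assoc (p + 1 : ℝ), ← pow_succ, Nat.sub_add_cancel (Nat.one_le_iff_ne_zero.2 hp)]
          ring
      _ ≤ 1 * |y - x| ^ p := by
          gcongr
          rwa [le_div_iff₀ hp1] at hσ
      _ = |y - x| ^ p := one_mul _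
  calc _ ≤ |a + y ^ p| + |(y - x) ^ p| + |σ * ((p + 1) * |y - x| ^ (p - 1) * (y - x))| := by
        grw [abs_add_le, abs_sub]
    _ ≤ 3 * |y - x| ^ p := by rw [abs_pow]; linarith

theorem stmt_16_general (q p : ℕ) (hq2 : 2 ≤ q) (hpq : q - 1 < p)
    (xk σ : ℝ) (hσ0 : 0 ≤ σ) (hσ : σ ≤ 1 / (p + 1))
    (yk : ℝ) (hyk : yk = -(|xk| ^ ((p : ℝ) / ((q : ℝ) - 1))) * Real.sign xk)
    (m : ℝ → ℝ)
    (hm : ∀ y, m y = (y ^ q / q + y ^ (p + 1) / (p + 1))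
        - (1 / (p + 1)) * (y - xk) ^ (p + 1) + σ * |y - xk| ^ (p + 1)) :
    |deriv m yk| ≤ 3 * |yk - xk| ^ p := by
  have hp : p ≠ 0 := by omega
  obtain rfl : m = regTaylorModel q p xk σ := funext hm
  rw [(hasDerivAt_regTaylorModel (by omega) hp xk σ yk).deriv]
  set c := |xk| ^ ((p : ℝ) / ((q : ℝ) - 1)) with hc_def
  have hc : 0 ≤ c := by positivity
  have hcpow : c ^ (q - 1) = |xk| ^ p := by
    have hq1 : ((q - 1 : ℕ) : ℝ) = q - 1 := by push_cast [show 1 ≤ q by omega]; ring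
    rw [hc_def, ← Real.rpow_natCast, ← Real.rpow_mul (abs_nonneg xk), hq1,
      div_mul_cancel₀ _ (by rw [← hq1]; exact_mod_cast (by omega : q - 1 ≠ 0)),
      Real.rpow_natCast]
  refine abs_regTaylorModel_deriv_le hp hσ0 hσ ?_ ?_
  · calc |yk ^ (q - 1)| = |yk| ^ (q - 1) := abs_pow _ _
      _ ≤ c ^ (q - 1) := by
        rw [hyk, abs_mul, abs_neg, abs_of_nonneg hc]
        gcongr
        exact mul_le_of_le_one_right hc (Real.abs_sign_le_one xk)
      _ = |xk| ^ p := hcpow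
  · refine abs_sub_eq_abs_add_abs_of_mul_nonpos ?_
    rw [hyk]
    nlinarith [mul_nonneg hc (Real.sign_mul_nonneg xk)]

theorem stmt_16 (q p : ℕ) (hq2 : 2 ≤ q) (hqeven : Even q) (hpq : q - 1 < p)
    (xk σ : ℝ) (hxk : xk ≠ 0) (hσ0 : 0 ≤ σ) (hσ : σ ≤ 1 / (p + 1))
    (yk : ℝ) (hyk : yk = -(|xk| ^ ((p : ℝ) / ((q : ℝ) - 1))) * Real.sign xk)
    (m : ℝ → ℝ)
    (hm : ∀ y, m y = (y ^ q / q + y ^ (p + 1) / (p + 1))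
        - (1 / (p + 1)) * (y - xk) ^ (p + 1) + σ * |y - xk| ^ (p + 1)) :
    |deriv m yk| ≤ 3 * |yk - xk| ^ p :=
  stmt_16_general q p hq2 hpq xk σ hσ0 hσ yk hyk m hm
end

section
/- Let a, b be coprime positive integers and define a sequence (c_k) of integers by: c_{k+1} = c_k − a if c_k ≥ c*, and c_{k+1} = c_k + b if c_k < c*, for a fixed integer c*. Then the sequence is eventually periodic with period a + b, and within each period exactly b terms satisfy c_k ≥ c* and exactly a terms satisfy c_k < c*; moreover, eventually all terms lie in the interval [c* − a, c* + b). -/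
theorem stmt_18 (a b : ℕ) (ha : 1 ≤ a) (hb : 1 ≤ b) (hab : Nat.Coprime a b)
    (cs : ℤ) (c : ℕ → ℤ)
    (hrec : ∀ k, c (k + 1) = if cs ≤ c k then c k - a else c k + b) :
    ∃ K, (∀ k ≥ K, c (k + (a + b)) = c k) ∧
      (∀ k ≥ K, c k ∈ Set.Ico (cs - a) (cs + b)) ∧
      (∀ k ≥ K,
        ((Finset.range (a + b)).filter (fun i => cs ≤ c (k + i))).card = b ∧
        ((Finset.range (a + b)).filter (fun i => c (k + i) < cs)).card = a) := by
  classical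
  have ha' : (1:ℤ) ≤ (a:ℤ) := by exact_mod_cast ha
  have hb' : (1:ℤ) ≤ (b:ℤ) := by exact_mod_cast hb
  -- Step A: the sequence eventually enters the interval [cs - a, cs + b)
  obtain ⟨K, hK⟩ : ∃ K, cs - (a:ℤ) ≤ c K ∧ c K < cs + b := by
    have key : ∀ n k, ((c k - (cs + b) + 1).toNat + (cs - a - c k).toNat) ≤ n →
        ∃ K, cs - (a:ℤ) ≤ c K ∧ c K < cs + b := by
      intro n
      induction n with
      | zero =>
        intro k hk
        exact ⟨k, by omega⟩
      | succ n ih =>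
        intro k hk
        by_cases h0 : cs - (a:ℤ) ≤ c k ∧ c k < cs + b
        · exact ⟨k, h0⟩
        · refine ih (k + 1) ?_
          rw [hrec k]
          split_ifs with h <;> omega
    exact key _ 0 le_rfl
  -- Step B: the interval is invariant
  have hIco : ∀ k, K ≤ k → cs - (a:ℤ) ≤ c k ∧ c k < cs + b := by
    intro k hk
    induction k, hk using Nat.le_induction with
    | base => exact hK
    | succ k hk ih =>
      rw [hrec k]
      split_ifs with h <;> omega
  -- Step C: congruence mod (a + b)
  have hmod : ∀ k n : ℕ, ((a:ℤ) + b) ∣ (c (k + n) - c k - n * b) := by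
    intro k n
    induction n with
    | zero => simp
    | succ n ih =>
      obtain ⟨t, ht⟩ := ih
      rw [show k + (n + 1) = (k + n) + 1 from rfl, hrec (k + n)]
      split_ifs with h
      · exact ⟨t - 1, by push_cast; linear_combination ht⟩
      · exact ⟨t, by push_cast; linear_combination ht⟩
  have hab0 : (0:ℤ) < (a:ℤ) + b := by linarith
  -- Step D: periodicity
  have hper : ∀ k, K ≤ k → c (k + (a + b)) = c k := by
    intro k hk
    have h1 := hIco k hk
    have h2 := hIco (k + (a + b)) (le_trans hk (Nat.le_add_right _ _))
    obtain ⟨t, ht⟩ := hmod k (a + b)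
    have key : c (k + (a + b)) - c k = ((a:ℤ) + b) * (t + b) := by
      push_cast at ht ⊢
      linear_combination ht
    have h3 : ((a:ℤ) + b) * (t + b) < ((a:ℤ) + b) * 1 := by
      rw [mul_one]; linarith [h1.1, h2.2]
    have h4 : ((a:ℤ) + b) * (-1) < ((a:ℤ) + b) * (t + b) := by
      linarith [h1.2, h2.1]
    have h5 : t + (b:ℤ) < 1 := (mul_lt_mul_iff_right₀ hab0).mp h3
    have h6 : (-1:ℤ) < t + b := (mul_lt_mul_iff_right₀ hab0).mp h4
    have h7 : t + (b:ℤ) = 0 := by omega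
    rw [h7, mul_zero] at key
    linarith
  refine ⟨K, hper, fun k hk => Set.mem_Ico.mpr (hIco k hk), ?_⟩
  -- Step E: counting
  intro k hk
  have htel : ∑ i ∈ Finset.range (a + b), (c (k + i + 1) - c (k + i)) =
      c (k + (a + b)) - c k :=
    Finset.sum_range_sub (fun i => c (k + i)) (a + b)
  have hterm : ∀ i, c (k + i + 1) - c (k + i) = if cs ≤ c (k + i) then -(a:ℤ) else b := by
    intro i
    rw [hrec (k + i)]
    split_ifs <;> ring
  rw [hper k hk, sub_self, Finset.sum_congr rfl (fun i _ => hterm i),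
    Finset.sum_ite, Finset.sum_const, Finset.sum_const, nsmul_eq_mul, nsmul_eq_mul] at htel
  set S := ((Finset.range (a + b)).filter (fun i => cs ≤ c (k + i))).card with hSdef
  set T := ((Finset.range (a + b)).filter (fun i => ¬ cs ≤ c (k + i))).card with hTdef
  have hcard : S + T = a + b := by
    have := Finset.card_filter_add_card_filter_not
      (s := Finset.range (a + b)) (p := fun i => cs ≤ c (k + i))
    rw [Finset.card_range] at this
    exact this
  have hST : (S:ℤ) + T = (a:ℤ) + b := by exact_mod_cast hcard
  have hSb : (S:ℤ) * ((a:ℤ) + b) = (b:ℤ) * ((a:ℤ) + b) := by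
    linear_combination (-1 : ℤ) * htel + (b:ℤ) * hST
  have hSb' : (S:ℤ) = b := mul_right_cancel₀ (ne_of_gt hab0) hSb
  have hS : S = b := by exact_mod_cast hSb'
  have hT : T = a := by omega
  refine ⟨hS, ?_⟩
  have hfilt : (Finset.range (a + b)).filter (fun i => c (k + i) < cs) =
      (Finset.range (a + b)).filter (fun i => ¬ cs ≤ c (k + i)) := by
    apply Finset.filter_congr
    intro i _
    simp [not_le]
  rw [hfilt]
  exact hT
end
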